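/- arXiv:1212.5173 — 6 statements merged into one kernel-verified Lean document; each statement's English description precedes it below -/
import Mathlib

section
/- Let H = A * B be a free product of groups, and let a ∈ H be an element whose reduced form begins and ends with a nontrivial letter from B. Let n be the order of a (n = 0 if infinite order). Then the subgroup of H generated by A and a is naturally isomorphic to the free product A * ⟨a⟩, where ⟨a⟩ is cyclic of order n; that is, the canonical homomorphism A * Z/nZ → H (identity on A, generator ↦ a) is injective. -/
open Monoid

namespace Stmt6Aux

open Monoid CoprodI

/-- Build a `NeWord` from a suitable list. -/
lemma exists_neword_of_list {ι : Type*} {M : ι → Type*} [∀ i, Monoid (M i)] :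
    ∀ (l : List (Σ i, M i)) {i j : ι},
      l.head?.map Sigma.fst = some i → l.getLast?.map Sigma.fst = some j →
      (∀ p ∈ l, p.2 ≠ 1) → l.Chain' (fun p q => p.1 ≠ q.1) →
      ∃ w : NeWord M i j, w.toList = l
  | [], _, _, hh, _, _, _ => by simp at hh
  | [p], i, j, hh, hl, hne, _ => by
      simp only [List.head?_cons, Option.map_some, Option.some.injEq] at hh
      simp only [List.getLast?_singleton, Option.map_some, Option.some.injEq] at hl
      subst hh; subst hl
      exact ⟨NeWord.singleton p.2 (hne p (by simp)), by simp⟩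
  | (p :: q :: rest), i, j, hh, hl, hne, hch => by
      simp only [List.head?_cons, Option.map_some, Option.some.injEq] at hh
      subst hh
      rw [List.getLast?_cons_cons] at hl
      simp only [List.Chain', List.isChain_cons_cons] at hch
      obtain ⟨w', hw'⟩ := exists_neword_of_list (q :: rest) (i := q.1) (by simp) hl
        (fun x hx => hne x (by simp [hx])) hch.2
      exact ⟨NeWord.append (NeWord.singleton p.2 (hne p (by simp))) hch.1 w',
        by simp [hw']⟩

variable {K : Bool → Type*} [∀ b, Group (K b)]

lemma neword_prod_eq {i j : Bool} (w : NeWord K i j) :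
    w.prod = (w.toList.map fun p => CoprodI.of p.2).prod := rfl

lemma bool_eq_not {a b : Bool} (h : a ≠ b) : b = !a := by
  cases a <;> cases b <;> simp_all

lemma bool_ne_not (a : Bool) : a ≠ !a := by cases a <;> simp

/-- Positive powers of an element with a reduced word starting and ending in the same
factor are trivial or again have such a reduced word. -/
lemma neword_pow :
    ∀ (N : ℕ) {i : Bool} (w : NeWord K i i), w.toList.length ≤ N →
      ∀ k : ℕ, w.prod ^ (k + 1) = 1 ∨ ∃ v : NeWord K i i, v.prod = w.prod ^ (k + 1) := by
  intro N
  induction N with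
  | zero =>
    intro i w hw k
    exact absurd (List.length_eq_zero_iff.1 (Nat.le_zero.1 hw)) w.toList_ne_nil
  | succ N IH =>
    intro i w hlen k
    have hlist := w.toList_head?
    have hlast := w.toList_getLast?
    have hch : w.toList.Chain' (fun p q => p.1 ≠ q.1) := w.toWord.chain_ne
    have hne1 : ∀ p ∈ w.toList, p.2 ≠ 1 := w.toWord.ne_one
    have hprodw : w.prod = (w.toList.map fun p => CoprodI.of p.2).prod := rfl
    rcases hlt : w.toList with _ | ⟨p, rest⟩
    · exact absurd hlt w.toList_ne_nil
    rw [hlt] at hlist hlast hch hne1 hprodw hlen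
    have hp : p = ⟨i, w.head⟩ := by simpa using hlist
    subst hp
    rcases rest with _ | ⟨q0, rest'⟩
    · -- singleton case
      have hw1 : w.prod = CoprodI.of w.head := by rw [hprodw]; simp
      by_cases hh : w.head ^ (k + 1) = 1
      · left; rw [hw1, ← map_pow, hh, map_one]
      · right
        exact ⟨NeWord.singleton (w.head ^ (k + 1)) hh, by
          rw [NeWord.prod_singleton, hw1, ← map_pow]⟩
    · -- length ≥ 2
      have hq0ne : (q0 :: rest') ≠ ([] : List (Σ b, K b)) := by simp
      set m' := (q0 :: rest').dropLast with hm'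
      set q := (q0 :: rest').getLast hq0ne with hq
      have hsplit : q0 :: rest' = m' ++ [q] := (List.dropLast_append_getLast hq0ne).symm
      have hqval : q = ⟨i, w.last⟩ := by
        rw [List.getLast?_cons_cons, List.getLast?_eq_getLast hq0ne] at hlast
        simpa [← hq] using hlast
      rw [hsplit] at hch hne1 hprodw hlen
      -- m' is nonempty
      have hm'ne : m' ≠ [] := by
        intro h0
        rw [h0] at hch
        simp only [List.Chain', List.nil_append, List.isChain_cons_cons] at hch
        exact hch.1 (by rw [hqval])
      -- chain facts
      simp only [List.Chain', List.isChain_cons] at hch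
      obtain ⟨hch1, hch2⟩ := hch
      rw [List.isChain_append] at hch2
      obtain ⟨hchm, -, hchlast⟩ := hch2
      -- head and last of m' have index !i
      have hm0 : m'.head? = some (m'.head hm'ne) := List.head?_eq_head hm'ne
      have hmlast : m'.getLast? = some (m'.getLast hm'ne) := List.getLast?_eq_getLast hm'ne
      have hm0fst : (m'.head hm'ne).1 = !i := by
        apply bool_eq_not
        have h1 : (m' ++ [q]).head? = some (m'.head hm'ne) := by
          rw [List.head?_append_of_ne_nil _ hm'ne]
          exact hm0
        exact hch1 _ h1
      have hmlastfst : (m'.getLast hm'ne).1 = !i := by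
        apply bool_eq_not
        intro hcon
        have hne2 := hchlast _ hmlast q (by simp)
        exact hne2 (by rw [hqval, ← hcon])
      -- build the middle NeWord
      obtain ⟨m, hm⟩ := exists_neword_of_list m' (i := !i) (j := !i)
        (by rw [hm0]; simp [hm0fst]) (by rw [hmlast]; simp [hmlastfst])
        (fun x hx => hne1 x (by simp [hx])) hchm
      -- head and last letters are nontrivial
      have hh1 : w.head ≠ 1 := hne1 ⟨i, w.head⟩ (by simp)
      have ht1 : w.last ≠ 1 := by
        have h0 := hne1 q (by simp)
        rw [hqval] at h0
        exact h0
      -- product decomposition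
      have hmprod : m.prod = (m'.map fun p => CoprodI.of p.2).prod := by
        rw [neword_prod_eq, hm]
      have hwprod : w.prod = CoprodI.of w.head * m.prod * CoprodI.of w.last := by
        rw [hprodw, hqval, hmprod]
        simp [List.map_append, List.prod_append, mul_assoc]
      have hmlen : m.toList.length ≤ N := by
        rw [hm]
        simp only [List.length_cons, List.length_append, List.length_singleton] at hlen
        omega
      by_cases hc : w.last * w.head = 1
      · -- conjugate case
        have hofinv : CoprodI.of w.last = (CoprodI.of (i := i) w.head)⁻¹ :=
          eq_inv_of_mul_eq_one_left (by rw [← map_mul, hc, map_one])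
        have hpowkey : w.prod ^ (k + 1) =
            CoprodI.of w.head * m.prod ^ (k + 1) * (CoprodI.of (i := i) w.head)⁻¹ := by
          rw [hwprod, hofinv, conj_pow]
        rcases IH m hmlen k with h1 | ⟨v', hv'⟩
        · left; rw [hpowkey, h1, mul_one, mul_inv_cancel]
        · right
          refine ⟨NeWord.append (NeWord.append (NeWord.singleton w.head hh1)
            (bool_ne_not i) v') (Ne.symm (bool_ne_not i)) (NeWord.singleton w.last ht1), ?_⟩
          rw [NeWord.append_prod, NeWord.append_prod, NeWord.prod_singleton,
            NeWord.prod_singleton, hv', hpowkey, hofinv]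
      · -- non-cancelling case
        right
        have key : ∀ k : ℕ, ∃ v : NeWord K i i,
            v.prod = w.prod ^ (k + 1) ∧ v.head = w.head := by
          intro k
          induction k with
          | zero => exact ⟨w, by simp, rfl⟩
          | succ k ihk =>
            obtain ⟨v, hv, hvh⟩ := ihk
            have hmul : w.last * v.head ≠ 1 := by rw [hvh]; exact hc
            refine ⟨NeWord.append (NeWord.append (NeWord.singleton w.head hh1)
              (bool_ne_not i) m) (Ne.symm (bool_ne_not i)) (v.mulHead w.last hmul), ?_, ?_⟩
            · rw [NeWord.append_prod, NeWord.append_prod, NeWord.prod_singleton,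
                NeWord.mulHead_prod, hv, pow_succ']
              rw [hwprod]
              group
            · simp [NeWord.append_head, NeWord.singleton_head]
        obtain ⟨v, hv, -⟩ := key k
        exact ⟨v, hv⟩

/-- Extension of `neword_pow` to integer powers. -/
lemma neword_zpow {i : Bool} (w : NeWord K i i) (k : ℤ) :
    w.prod ^ k = 1 ∨ ∃ v : NeWord K i i, v.prod = w.prod ^ k := by
  rcases lt_trichotomy k 0 with hk | rfl | hk
  · have hkey : w.prod ^ k = (w.prod ^ ((-k).toNat - 1 + 1))⁻¹ := by
      rw [← zpow_natCast]
      have : (((-k).toNat - 1 + 1 : ℕ) : ℤ) = -k := by omega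
      rw [this, ← zpow_neg, neg_neg]
    rcases neword_pow w.toList.length w le_rfl ((-k).toNat - 1) with h1 | ⟨v, hv⟩
    · left; rw [hkey, h1, inv_one]
    · right; exact ⟨v.inv, by rw [NeWord.inv_prod, hv, hkey]⟩
  · left; exact zpow_zero _
  · have hkey : w.prod ^ k = w.prod ^ (k.toNat - 1 + 1) := by
      rw [← zpow_natCast]
      congr 1
      omega
    rcases neword_pow w.toList.length w le_rfl (k.toNat - 1) with h1 | ⟨v, hv⟩
    · left; rw [hkey, h1]
    · right; exact ⟨v, by rw [hv, hkey]⟩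

/-- Mapping `NeWord`s through a homomorphism that sends generators to elements with
two-sided reduced words of the same index. -/
lemma map_neword {K' : Bool → Type*} [∀ b, Group (K' b)]
    (F : CoprodI K' →* CoprodI K)
    (hgen : ∀ (b : Bool) (x : K' b), x ≠ 1 → ∃ v : NeWord K b b, v.prod = F (CoprodI.of x)) :
    ∀ {i j : Bool} (u : NeWord K' i j), ∃ v : NeWord K i j, v.prod = F u.prod := by
  intro i j u
  induction u with
  | singleton x hx =>
    obtain ⟨v, hv⟩ := hgen _ x hx
    exact ⟨v, by rw [hv, NeWord.prod_singleton]⟩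
  | append u₁ hne u₂ ih₁ ih₂ =>
    obtain ⟨v₁, hv₁⟩ := ih₁
    obtain ⟨v₂, hv₂⟩ := ih₂
    exact ⟨NeWord.append v₁ hne v₂, by
      rw [NeWord.append_prod, NeWord.append_prod, hv₁, hv₂, map_mul]⟩

lemma injective_of_neword {K' : Bool → Type*} [∀ b, Group (K' b)]
    (F : CoprodI K' →* CoprodI K)
    (hgen : ∀ (b : Bool) (x : K' b), x ≠ 1 → ∃ v : NeWord K b b, v.prod = F (CoprodI.of x)) :
    Function.Injective F := by
  classical
  rw [injective_iff_map_eq_one]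
  intro g hg
  by_contra hgne
  have hprodg : (Word.equiv g).prod = g := Word.equiv.symm_apply_apply g
  have hwne : Word.equiv g ≠ Word.empty := by
    intro h
    apply hgne
    rw [← hprodg, h, Word.prod_empty]
  obtain ⟨i, j, u, hu⟩ := NeWord.of_word _ hwne
  have hup : u.prod = g := by
    have : u.prod = u.toWord.prod := rfl
    rw [this, hu, hprodg]
  obtain ⟨v, hv⟩ := map_neword F hgen u
  rw [hup, hg] at hv
  have h0 : (Word.equiv.symm (Word.empty : Word K) : CoprodI K) = 1 := Word.prod_empty
  have hempty : Word.equiv (1 : CoprodI K) = Word.empty := by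
    rw [← h0, Word.equiv.apply_symm_apply]
  have hvw : v.toWord = Word.empty := by
    have h1 : Word.equiv v.prod = v.toWord := Word.equiv.apply_symm_apply v.toWord
    rw [hv] at h1
    rw [← h1, hempty]
  exact v.toList_ne_nil (congrArg Word.toList hvw)

universe uu vv

/-- The family `{false ↦ A, true ↦ C}`. -/
@[reducible] def KF (A : Type uu) (C : Type vv) : Bool → Type (max uu vv) :=
  fun b => Bool.rec (ULift.{vv} A) (ULift.{uu} C) b

instance (A : Type uu) (C : Type vv) [Group A] [Group C] (b : Bool) : Group (KF A C b) := by
  cases b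
  · exact inferInstanceAs (Group (ULift A))
  · exact inferInstanceAs (Group (ULift C))

end Stmt6Aux

open Stmt6Aux in
theorem stmt_6 (K : Bool → Type*) [∀ b, Group (K b)]
    (a : CoprodI K) (w : CoprodI.Word K)
    (hprod : w.prod = a)
    (hhead : w.toList.head?.map Sigma.fst = some true)
    (hlast : w.toList.getLast?.map Sigma.fst = some true)
    (f : Coprod (K false) (Multiplicative (ZMod (orderOf a))) →* CoprodI K)
    (hfA : ∀ x : K false, f (Coprod.inl x) = CoprodI.of x)
    (hfa : f (Coprod.inr (Multiplicative.ofAdd (1 : ZMod (orderOf a)))) = a) :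
    Function.Injective f := by
  classical
  set A := K false with hA
  set C := Multiplicative (ZMod (orderOf a)) with hC
  -- the map into the free product of the family
  let φ : Coprod A C →* CoprodI (KF A C) :=
    Coprod.lift
      ((CoprodI.of (M := KF A C) (i := false)).comp MulEquiv.ulift.symm.toMonoidHom)
      ((CoprodI.of (M := KF A C) (i := true)).comp MulEquiv.ulift.symm.toMonoidHom)
  -- the map back
  let ψ : CoprodI (KF A C) →* Coprod A C :=
    CoprodI.lift (fun b => Bool.rec (motive := fun b => KF A C b →* Coprod A C)
      (Coprod.inl.comp MulEquiv.ulift.toMonoidHom)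
      (Coprod.inr.comp MulEquiv.ulift.toMonoidHom) b)
  have hψφ : ψ.comp φ = MonoidHom.id _ := by
    apply Coprod.hom_ext
    · ext x
      simp [φ, ψ, Coprod.lift_apply_inl, CoprodI.lift_of]
    · ext x
      simp [φ, ψ, Coprod.lift_apply_inr, CoprodI.lift_of]
  have hφinj : Function.Injective φ := by
    intro x y h
    have := congrArg ψ h
    simpa [← MonoidHom.comp_apply, hψφ] using this
  set F : CoprodI (KF A C) →* CoprodI K := f.comp ψ with hF
  -- the word for `a` as a NeWord
  have hwne : w ≠ CoprodI.Word.empty := by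
    intro h
    rw [h] at hhead
    simp [CoprodI.Word.empty] at hhead
  obtain ⟨i', j', u, hu⟩ := CoprodI.NeWord.of_word w hwne
  have hulist : u.toList = w.toList := congrArg CoprodI.Word.toList hu
  have hi' : i' = true := by
    have h1 := u.toList_head?
    rw [hulist] at h1
    rw [h1] at hhead
    simpa using hhead
  have hj' : j' = true := by
    have h1 := u.toList_getLast?
    rw [hulist] at h1
    rw [h1] at hlast
    simpa using hlast
  subst hi'; subst hj'
  have hua : u.prod = a := by
    have : u.prod = u.toWord.prod := rfl
    rw [this, hu, hprod]
  -- generators go to NeWords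
  have hgen : ∀ (b : Bool) (x : KF A C b), x ≠ 1 →
      ∃ v : CoprodI.NeWord K b b, v.prod = F (CoprodI.of x) := by
    intro b
    cases b
    · intro x hx
      have hxd : x.down ≠ 1 := by
        intro h; apply hx; apply ULift.down_injective h
      have hψx : ψ (CoprodI.of x) = Coprod.inl x.down := by
        simp only [ψ, CoprodI.lift_of]
        rfl
      have hFx : F (CoprodI.of x) = CoprodI.of (x.down : K false) := by
        rw [hF, MonoidHom.comp_apply, hψx]
        exact hfA x.down
      exact ⟨CoprodI.NeWord.singleton x.down hxd, by
        rw [CoprodI.NeWord.prod_singleton, hFx]⟩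
    · intro c hc
      have hψc : ψ (CoprodI.of c) = Coprod.inr c.down := by
        simp only [ψ, CoprodI.lift_of]
        rfl
      have hFc : F (CoprodI.of c) = f (Coprod.inr c.down) := by
        rw [hF, MonoidHom.comp_apply, hψc]
      obtain ⟨k, hk⟩ := ZMod.intCast_surjective (Multiplicative.toAdd c.down)
      have hcd : c.down = Multiplicative.ofAdd ((k : ZMod (orderOf a))) := by
        rw [hk]; rfl
      have hak : f (Coprod.inr c.down) = a ^ k := by
        rw [hcd]
        have h1 : Multiplicative.ofAdd ((k : ZMod (orderOf a))) =
            (Multiplicative.ofAdd (1 : ZMod (orderOf a))) ^ k := by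
          rw [← ofAdd_zsmul]
          congr 1
          rw [zsmul_eq_mul, mul_one]
        rw [h1, map_zpow, map_zpow, hfa]
      have hak1 : a ^ k ≠ 1 := by
        intro h
        apply hc
        have hdvd : ((orderOf a : ℤ)) ∣ k := orderOf_dvd_iff_zpow_eq_one.2 h
        have hk0 : ((k : ZMod (orderOf a))) = 0 :=
          (ZMod.intCast_zmod_eq_zero_iff_dvd k (orderOf a)).2 hdvd
        have : c.down = 1 := by
          rw [hcd, hk0]; rfl
        apply ULift.down_injective this
      rcases neword_zpow u k with h1 | ⟨v, hv⟩
      · rw [hua] at h1; exact absurd h1 hak1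
      · rw [hua] at hv
        exact ⟨v, by rw [hv, hFc, hak]⟩
  have hFinj : Function.Injective F := injective_of_neword F hgen
  intro x y h
  apply hφinj
  apply hFinj
  show f (ψ (φ x)) = f (ψ (φ y))
  have hx : ψ (φ x) = x := by
    have := congrArg (fun g => g x) hψφ; simpa using this
  have hy : ψ (φ y) = y := by
    have := congrArg (fun g => g y) hψφ; simpa using this
  rw [hx, hy, h]
end

section
/- Let H = A * B be a free product, and let h ∈ H be an element whose reduced form begins and ends with a nontrivial letter of B. Suppose a₁,…,a_s is a sequence of nonzero integers and p₁,…,p_s nontrivial elements of A with s ≥ 1. Then h^{a₁} p₁ h^{a₂} p₂ ⋯ h^{a_s} p_s ≠ 1 in H, provided each a_j is not a multiple of the order of h. -/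
open Monoid

section Aux

variable {K : Bool → Type*} [∀ b, Group (K b)]

private lemma bool_ne_not (c : Bool) : c ≠ !c := by cases c <;> decide

private lemma bool_eq_not_of_ne {c d : Bool} (h : d ≠ c) : d = !c := by
  cases c <;> cases d <;> simp_all

/-- Alternating words: list-like reduced nonempty words. -/
inductive AltW (K : Bool → Type*) [∀ b, Group (K b)] : Bool → Bool → Type _
  | single : ∀ {c} (x : K c), x ≠ 1 → AltW K c c
  | cons : ∀ {c d e} (x : K c), x ≠ 1 → c ≠ d → AltW K d e → AltW K c e

namespace AltW

def prod : ∀ {i j}, AltW K i j → CoprodI K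
  | _, _, single x _ => CoprodI.of x
  | _, _, cons x _ _ w => CoprodI.of x * w.prod

def length : ∀ {i j}, AltW K i j → ℕ
  | _, _, single _ _ => 1
  | _, _, cons _ _ _ w => w.length + 1

def toNeWord : ∀ {i j}, AltW K i j → CoprodI.NeWord K i j
  | _, _, single x hx => .singleton x hx
  | _, _, cons x hx hcd w => .append (.singleton x hx) hcd w.toNeWord

lemma prod_toNeWord : ∀ {i j} (w : AltW K i j), w.toNeWord.prod = w.prod := by
  intro i j w
  induction w with
  | single x hx => exact CoprodI.NeWord.prod_singleton x hx
  | cons x hx hcd w ih =>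
    rw [toNeWord, CoprodI.NeWord.append_prod, CoprodI.NeWord.prod_singleton, ih, prod]

lemma prod_ne_one {i j : Bool} (w : AltW K i j) : w.prod ≠ 1 := by
  classical
  intro hcontra
  have h1 : w.toNeWord.toWord.prod = 1 := by
    rw [show w.toNeWord.toWord.prod = w.toNeWord.prod from rfl, prod_toNeWord, hcontra]
  have hinj : Function.Injective (CoprodI.Word.prod : CoprodI.Word K → CoprodI K) :=
    CoprodI.Word.equiv.symm.injective
  have h2 : w.toNeWord.toWord = CoprodI.Word.empty := by
    apply hinj
    rw [h1, CoprodI.Word.prod_empty]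
  have h3 := congrArg CoprodI.Word.toList h2
  exact w.toNeWord.toList_ne_nil h3

def app : ∀ {i j k l}, AltW K i j → j ≠ k → AltW K k l → AltW K i l
  | _, _, _, _, single x hx, h, w₂ => cons x hx h w₂
  | _, _, _, _, cons x hx hcd w₁, h, w₂ => cons x hx hcd (app w₁ h w₂)

lemma prod_app : ∀ {i j k l} (w₁ : AltW K i j) (h : j ≠ k) (w₂ : AltW K k l),
    (w₁.app h w₂).prod = w₁.prod * w₂.prod := by
  intro i j k l w₁ h w₂
  induction w₁ with
  | single x hx => rfl
  | cons x hx hcd w ih => simp only [app, prod, ih, mul_assoc]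

lemma unsnoc : ∀ {i j} (w : AltW K i j),
    (∃ (x : K i) (_ : x ≠ 1), i = j ∧ w.prod = CoprodI.of x ∧ w.length = 1) ∨
    (∃ (d : Bool) (_ : d ≠ j) (w' : AltW K i d) (y : K j) (_ : y ≠ 1),
      w.prod = w'.prod * CoprodI.of y ∧ w.length = w'.length + 1) := by
  intro i j w
  induction w with
  | single x hx => exact Or.inl ⟨x, hx, rfl, rfl, rfl⟩
  | @cons c d e x hx hcd w ih =>
    rcases ih with ⟨x', hx', rfl, hw', hlen⟩ | ⟨d', hd'e, w'', y, hy, hw', hlen⟩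
    · refine Or.inr ⟨c, hcd, single x hx, x', hx', ?_, ?_⟩
      · simp only [prod, hw']
      · simp only [length, hlen]
    · refine Or.inr ⟨d', hd'e, cons x hx hcd w'', y, hy, ?_, ?_⟩
      · simp only [prod, hw', mul_assoc]
      · simp only [length, hlen]

lemma one_le_length {i j : Bool} (w : AltW K i j) : 1 ≤ w.length := by
  cases w <;> simp [length]

def inv : ∀ {i j}, AltW K i j → AltW K j i
  | _, _, single x hx => single x⁻¹ (inv_ne_one.2 hx)
  | _, _, cons x hx hcd w => app w.inv hcd.symm (single x⁻¹ (inv_ne_one.2 hx))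

lemma prod_inv : ∀ {i j} (w : AltW K i j), w.inv.prod = w.prod⁻¹ := by
  intro i j w
  induction w with
  | single x hx => simp [inv, prod, map_inv]
  | cons x hx hcd w ih =>
    rw [inv, prod_app, ih]
    simp [prod, mul_inv_rev, map_inv]

end AltW

/-- Nested structure for elements whose reduced word begins and ends in factor `c`. -/
inductive CycW (K : Bool → Type*) [∀ b, Group (K b)] : Bool → Type _
  | single : ∀ {c} (x : K c), x ≠ 1 → CycW K c
  | wrap : ∀ {c} (x y : K c), x ≠ 1 → y ≠ 1 → CycW K (!c) → CycW K c

namespace CycW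

def prod : ∀ {c}, CycW K c → CoprodI K
  | _, single x _ => CoprodI.of x
  | _, wrap x y _ _ m => CoprodI.of x * m.prod * CoprodI.of y

lemma toAlt : ∀ {c} (cy : CycW K c), ∃ a : AltW K c c, a.prod = cy.prod := by
  intro c cy
  induction cy with
  | single x hx => exact ⟨.single x hx, rfl⟩
  | @wrap c x y hx hy m ih =>
    obtain ⟨A, hA⟩ := ih
    refine ⟨.cons x hx (bool_ne_not c)
      (A.app (Ne.symm (bool_ne_not c)) (.single y hy)), ?_⟩
    rw [AltW.prod, AltW.prod_app, hA, prod]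
    simp [AltW.prod, mul_assoc]

end CycW

/-- From an `AltW c c` of bounded length we can extract the nested `CycW` structure. -/
lemma altToCyc : ∀ (n : ℕ) {c} (w : AltW K c c), w.length ≤ n →
    ∃ cy : CycW K c, cy.prod = w.prod := by
  intro n
  induction n with
  | zero => intro c w hw; exact absurd (le_trans w.one_le_length hw) (by omega)
  | succ n IH =>
    intro c w hw
    cases w with
    | single x hx => exact ⟨.single x hx, rfl⟩
    | @cons c d e x hx hcd w' =>
      rcases w'.unsnoc with ⟨x', hx', rfl, hw', hlen⟩ | ⟨d', hd'e, w'', y, hy, hw', hlen⟩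
      · exact absurd rfl hcd
      · have hd : d = !c := bool_eq_not_of_ne (Ne.symm hcd)
        have hd' : d' = !c := bool_eq_not_of_ne hd'e
        subst hd; subst hd'
        have hlen2 : w''.length ≤ n := by
          rw [AltW.length, hlen] at hw; omega
        obtain ⟨cy, hcy⟩ := IH w'' hlen2
        refine ⟨.wrap x y hx hy cy, ?_⟩
        rw [CycW.prod, hcy, AltW.prod, hw', mul_assoc]

private lemma mul_pow_alt {G : Type*} [Group G] (a b : G) :
    ∀ n : ℕ, (a * b) ^ (n + 1) = a * (b * a) ^ n * b := by
  intro n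
  induction n with
  | zero => simp
  | succ n ih =>
    rw [pow_succ', ih, pow_succ']
    simp [mul_assoc]

/-- Auxiliary word `A (z A)^k`. -/
def AltW.rep {c : Bool} (A : AltW K (!c) (!c)) (z : K c) (hz : z ≠ 1) : ℕ → AltW K (!c) (!c)
  | 0 => A
  | k + 1 => A.app (Ne.symm (bool_ne_not c)) (AltW.cons z hz (bool_ne_not c) (A.rep z hz k))

lemma AltW.prod_rep {c : Bool} (A : AltW K (!c) (!c)) (z : K c) (hz : z ≠ 1) :
    ∀ k : ℕ, (A.rep z hz k).prod = A.prod * (CoprodI.of z * A.prod) ^ k := by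
  intro k
  induction k with
  | zero => simp [rep]
  | succ k ih =>
    rw [rep, prod_app, AltW.prod, ih, pow_succ']
    simp [mul_assoc]

/-- Key lemma: natural powers of a `CycW c` element are trivial or representable
by an `AltW c c`. -/
lemma cyc_pow_nat : ∀ {c} (cy : CycW K c) (n : ℕ),
    cy.prod ^ n = 1 ∨ ∃ w : AltW K c c, w.prod = cy.prod ^ n := by
  intro c cy
  induction cy with
  | single x hx =>
    intro n
    by_cases h : x ^ n = 1
    · left; rw [CycW.prod, ← map_pow, h, map_one]
    · right; exact ⟨.single (x ^ n) h, by simp [CycW.prod, AltW.prod, ← map_pow]⟩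
  | @wrap c x y hx hy m ih =>
    intro n
    by_cases hz : y * x = 1
    · -- y = x⁻¹ : conjugation case
      have hyx : y = x⁻¹ := eq_inv_of_mul_eq_one_left hz
      subst hyx
      have hconj : (CycW.wrap x x⁻¹ hx hy m).prod = CoprodI.of x * m.prod * (CoprodI.of x)⁻¹ := by
        rw [CycW.prod, map_inv]
      rw [hconj, conj_pow]
      rcases ih n with h1 | ⟨w, hw⟩
      · left; rw [h1, mul_one, mul_inv_cancel]
      · right
        refine ⟨.cons x hx (bool_ne_not c)
          (w.app (Ne.symm (bool_ne_not c)) (.single x⁻¹ (inv_ne_one.2 hx))), ?_⟩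
        rw [AltW.prod, AltW.prod_app, hw]
        simp [AltW.prod, map_inv, mul_assoc]
    · -- no cancellation case
      cases n with
      | zero => left; exact pow_zero _
      | succ k =>
        right
        obtain ⟨A, hA⟩ := m.toAlt
        refine ⟨.cons x hx (bool_ne_not c)
          ((A.rep (y * x) hz k).app (Ne.symm (bool_ne_not c)) (.single y hy)), ?_⟩
        rw [AltW.prod, AltW.prod_app, AltW.prod_rep, hA]
        have key : (CycW.wrap x y hx hy m).prod ^ (k + 1) =
            CoprodI.of x * (m.prod * (CoprodI.of (y * x) * m.prod) ^ k *
              CoprodI.of (y * x)) * (CoprodI.of x)⁻¹ := by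
          have h1 : (CycW.wrap x y hx hy m).prod =
              CoprodI.of x * (m.prod * CoprodI.of (y * x)) * (CoprodI.of x)⁻¹ := by
            rw [CycW.prod, map_mul]
            group
          rw [h1, conj_pow, mul_pow_alt]
        rw [key, map_mul]
        simp [AltW.prod, mul_assoc]
lemma cyc_zpow {c} (cy : CycW K c) (n : ℤ) :
    cy.prod ^ n = 1 ∨ ∃ w : AltW K c c, w.prod = cy.prod ^ n := by
  rcases n with m | m
  · simpa using cyc_pow_nat cy m
  · rcases cyc_pow_nat cy (m + 1) with h1 | ⟨w, hw⟩
    · left; rw [zpow_negSucc, h1, inv_one]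
    · right; exact ⟨w.inv, by rw [AltW.prod_inv, hw, zpow_negSucc]⟩

lemma neWordToAlt : ∀ {i j} (nw : CoprodI.NeWord K i j), ∃ A : AltW K i j, A.prod = nw.prod := by
  intro i j nw
  induction nw with
  | singleton x hx =>
    exact ⟨.single x hx, by simp [AltW.prod, CoprodI.NeWord.prod_singleton]⟩
  | append w₁ hne' w₂ ih₁ ih₂ =>
    obtain ⟨A₁, hA₁⟩ := ih₁
    obtain ⟨A₂, hA₂⟩ := ih₂
    exact ⟨A₁.app hne' A₂, by rw [AltW.prod_app, hA₁, hA₂, CoprodI.NeWord.append_prod]⟩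

lemma list_prod_rep : ∀ (l : List (CoprodI K)), l ≠ [] →
    (∀ x ∈ l, ∃ w : AltW K true false, w.prod = x) →
    ∃ w : AltW K true false, w.prod = l.prod := by
  intro l
  induction l with
  | nil => intro h; exact absurd rfl h
  | cons x t ih =>
    intro _ hrep
    cases t with
    | nil =>
      obtain ⟨w, hw⟩ := hrep x (by simp)
      exact ⟨w, by simp [hw]⟩
    | cons y t' =>
      obtain ⟨w₁, hw₁⟩ := hrep x (by simp)
      obtain ⟨w₂, hw₂⟩ := ih (by simp) (fun z hz => hrep z (List.mem_cons_of_mem _ hz))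
      exact ⟨w₁.app (by decide) w₂, by rw [AltW.prod_app, hw₁, hw₂]; simp⟩

end Aux

/-- let `H = A * B` be a free product (factors `K false = A`, `K true = B`)
and `h ∈ H` an element whose reduced form begins and ends with a letter of `B`.  If
`s ≥ 1`, the `a j` are nonzero integers none of which is a multiple of the order of
`h`, and the `p j` are nontrivial elements of `A`, then
`h^{a₁} p₁ h^{a₂} p₂ ⋯ h^{a_s} p_s ≠ 1` in `H`. -/
theorem stmt_7 (K : Bool → Type*) [∀ b, Group (K b)]
    (h : CoprodI K) (w : CoprodI.Word K)
    (hprod : w.prod = h)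
    (hhead : w.toList.head?.map Sigma.fst = some true)
    (hlast : w.toList.getLast?.map Sigma.fst = some true)
    (s : ℕ) (hs : 1 ≤ s)
    (a : Fin s → ℤ) (ha : ∀ j, a j ≠ 0) (hord : ∀ j, ¬ ((orderOf h : ℤ) ∣ a j))
    (p : Fin s → K false) (hp : ∀ j, p j ≠ 1) :
    (List.ofFn fun j => h ^ (a j) * CoprodI.of (p j)).prod ≠ 1 := by
  -- the word is nonempty
  have hne : w ≠ CoprodI.Word.empty := by
    intro hw
    rw [hw] at hhead
    simp [CoprodI.Word.empty] at hhead
  obtain ⟨i, j, nw, hnw⟩ := CoprodI.NeWord.of_word w hne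
  have hlist : nw.toList = w.toList := congrArg CoprodI.Word.toList hnw
  have hi : i = true := by
    rw [← hlist, CoprodI.NeWord.toList_head?] at hhead
    simpa using hhead
  have hj : j = true := by
    rw [← hlist, CoprodI.NeWord.toList_getLast?] at hlast
    simpa using hlast
  subst hi; subst hj
  have hnwprod : nw.prod = h := by
    rw [show nw.prod = nw.toWord.prod from rfl, hnw, hprod]
  -- convert to AltW then CycW
  obtain ⟨A, hA⟩ : ∃ A : AltW K true true, A.prod = h := by
    obtain ⟨A, hA⟩ := neWordToAlt nw
    exact ⟨A, by rw [hA, hnwprod]⟩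
  obtain ⟨cy, hcy⟩ := altToCyc A.length A le_rfl
  rw [hA] at hcy
  -- each factor has an AltW true false representation
  have hfac : ∀ jj : Fin s, ∃ wf : AltW K true false,
      wf.prod = h ^ (a jj) * CoprodI.of (p jj) := by
    intro jj
    have hpow : h ^ (a jj) ≠ 1 := by
      intro hone
      exact hord jj (orderOf_dvd_iff_zpow_eq_one.2 hone)
    rcases cyc_zpow cy (a jj) with h1 | ⟨wp, hwp⟩
    · rw [hcy] at h1; exact absurd h1 hpow
    · rw [hcy] at hwp
      exact ⟨wp.app (by decide) (.single (p jj) (hp jj)),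
        by rw [AltW.prod_app, hwp, AltW.prod]⟩
  obtain ⟨W, hW⟩ := list_prod_rep (List.ofFn fun jj => h ^ (a jj) * CoprodI.of (p jj))
    (by
      intro hnil
      have := congrArg List.length hnil
      simp at this
      omega)
    (by
      intro x hx
      rw [List.mem_ofFn] at hx
      obtain ⟨jj, rfl⟩ := hx
      exact hfac jj)
  rw [← hW]
  exact W.prod_ne_one
end

section
/- In a free product A * B of two groups, the free factor A is malnormal provided B is nontrivial: for every u ∈ A * B with u ∉ A, A ∩ u⁻¹Au = {1}. -/
open Monoid

namespace Stmt13

open Monoid.CoprodI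

variable {ι : Type*} {G : ι → Type*} [∀ i, Group (G i)]

/-- The reduced word representing the inverse: reverse the list and invert each letter. -/
def invWord (w : Word G) : Word G where
  toList := w.toList.reverse.map fun l => ⟨l.1, l.2⁻¹⟩
  ne_one := by
    intro l hl
    simp only [List.mem_map, List.mem_reverse] at hl
    rcases hl with ⟨l', hl', rfl⟩
    simpa using w.ne_one l' hl'
  chain_ne := by
    rw [List.isChain_map, List.isChain_reverse]
    exact w.chain_ne.imp fun {a b} h => by exact fun h' => h h'.symm

theorem prod_invWord_aux (l : List (Σ i, G i)) :
    (l.reverse.map fun x : Σ i, G i => of x.2⁻¹).prod =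
      (l.map fun x : Σ i, G i => of x.2).prod⁻¹ := by
  induction l with
  | nil => simp
  | cons x xs ih =>
    simp only [map_inv, List.map_reverse] at ih ⊢
    simp [List.map_append, List.prod_append, ih, mul_inv_rev]

theorem prod_invWord (w : Word G) : (invWord w).prod = (w.prod)⁻¹ := by
  rw [Word.prod, Word.prod, invWord]
  simp only [List.map_map]
  exact prod_invWord_aux w.toList

theorem prod_injective : Function.Injective (Word.prod : Word G → CoprodI G) := by
  classical
  intro w w' h
  have h1 : Word.equiv w.prod = w := Word.equiv.right_inv w
  have h2 : Word.equiv w'.prod = w' := Word.equiv.right_inv w'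
  rw [← h1, ← h2, h]

theorem core {i : ι} (t : Word G) (hne : t.toList ≠ []) (hft : t.fstIdx ≠ some i)
    (a b : G i) (ha : a ≠ 1) : of a * t.prod ≠ t.prod * of b := by
  classical
  intro heq
  have heq' : of (b⁻¹) * (t.prod)⁻¹ = (t.prod)⁻¹ * of (a⁻¹) := by
    have h := congrArg (fun z => z⁻¹) heq
    simp only [mul_inv_rev] at h
    rw [← map_inv, ← map_inv] at h
    exact h.symm
  set rt : Word G := invWord t with hrt
  have hrtlist : rt.toList = t.toList.reverse.map fun l => ⟨l.1, l.2⁻¹⟩ := rfl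
  have hrtne : rt.toList ≠ [] := by simp [hrtlist, hne]
  have hrtprod : rt.prod = (t.prod)⁻¹ := prod_invWord t
  have hrtlast : ∀ x ∈ rt.toList.getLast?, Sigma.fst x ≠ i := by
    intro x hx hxi
    apply hft
    rw [hrtlist, List.getLast?_map, List.getLast?_reverse] at hx
    rcases Option.map_eq_some_iff.1 hx with ⟨l, hl, rfl⟩
    rw [Word.fstIdx, hl]
    simpa using hxi
  have hW1chain : (rt.toList ++ [(⟨i, a⁻¹⟩ : Σ i, G i)]).IsChain
      fun l l' => Sigma.fst l ≠ Sigma.fst l' := by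
    rw [List.isChain_append]
    refine ⟨rt.chain_ne, List.isChain_singleton _, ?_⟩
    intro x hx y hy
    simp only [List.head?_cons, Option.mem_def, Option.some.injEq] at hy
    subst hy
    exact hrtlast x hx
  set W1 : Word G := ⟨rt.toList ++ [⟨i, a⁻¹⟩], by
    intro l hl
    rcases List.mem_append.1 hl with h | h
    · exact rt.ne_one l h
    · simp only [List.mem_singleton] at h
      subst h
      simpa using ha, hW1chain⟩ with hW1
  have hW1list : W1.toList = rt.toList ++ [⟨i, a⁻¹⟩] := rfl
  have hW1prod : W1.prod = rt.prod * of (a⁻¹) := by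
    simp [hW1, Word.prod, List.map_append]
  have hsmul : of (b⁻¹) • rt = W1 := by
    apply prod_injective
    rw [Word.prod_smul, hW1prod, hrtprod]
    exact heq'
  set q := Word.equivPair i rt with hq
  have hrcq : Word.rcons q = rt := by
    rw [hq, ← Word.equivPair_symm]
    exact (Word.equivPair i).symm_apply_apply rt
  have hsm : W1 = Word.rcons ⟨b⁻¹ * q.head, q.tail, q.fstIdx_ne⟩ := by
    rw [← hsmul]
    exact Word.of_smul_def i rt b⁻¹
  have hlen : (Word.rcons ⟨b⁻¹ * q.head, q.tail, q.fstIdx_ne⟩).toList.length =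
      rt.toList.length + 1 := by
    rw [← hsm, hW1list]
    simp
  by_cases hqh : q.head = 1
  · have hqt : q.tail = rt := by
      rw [← hrcq, Word.rcons, dif_pos hqh]
    have hfrt : rt.fstIdx ≠ some i := hqt ▸ q.fstIdx_ne
    by_cases hb : b⁻¹ * q.head = 1
    · rw [Word.rcons, dif_pos hb, hqt] at hlen
      omega
    · rw [Word.rcons, dif_neg hb] at hsm
      have : W1.toList = ⟨i, b⁻¹ * q.head⟩ :: q.tail.toList := by
        rw [hsm]; rfl
      rw [hW1list, hqt] at this
      apply hfrt
      have hhead := congrArg List.head? this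
      rw [List.head?_append_of_ne_nil _ hrtne, List.head?_cons] at hhead
      rw [Word.fstIdx, hhead]
      rfl
  · have hlist : rt.toList = ⟨i, q.head⟩ :: q.tail.toList := by
      conv_lhs => rw [← hrcq, Word.rcons, dif_neg hqh]
      rfl
    by_cases hb : b⁻¹ * q.head = 1
    · rw [Word.rcons, dif_pos hb] at hlen
      rw [hlist] at hlen
      simp at hlen
      omega
    · rw [Word.rcons, dif_neg hb] at hlen
      rw [hlist] at hlen
      simp at hlen

theorem key {i : ι} {u : CoprodI G} (hu : u ∉ MonoidHom.range (of : G i →* CoprodI G))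
    {a b : G i} (hab : of a * u = u * of b) : a = 1 := by
  classical
  by_contra ha
  set w : Word G := Word.equiv u with hw
  have hwu : w.prod = u := Word.equiv.left_inv u
  set q := Word.equivPair i w with hq
  have hqw : of q.head • q.tail = w := Word.equivPair_head_smul_equivPair_tail w
  have hu' : of q.head * q.tail.prod = u := by
    rw [← Word.prod_smul, hqw, hwu]
  have htne : q.tail.toList ≠ [] := by
    intro h0
    apply hu
    refine ⟨q.head, ?_⟩
    have he : q.tail = Word.empty := Word.ext h0
    rw [← hu', he, Word.prod_empty, mul_one]
  have ha' : q.head⁻¹ * a * q.head ≠ 1 := by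
    intro h
    apply ha
    have := congrArg (fun z => q.head * z * q.head⁻¹) h
    simp only [mul_one, mul_assoc] at this
    simpa [← mul_assoc] using this
  have hab' : of (q.head⁻¹ * a * q.head) * q.tail.prod = q.tail.prod * of b := by
    apply mul_left_cancel (a := of q.head)
    have e : of q.head * (of (q.head⁻¹ * a * q.head) * q.tail.prod) = of a * u := by
      rw [← hu']
      simp only [map_mul, map_inv]
      group
    rw [e, hab, ← hu', mul_assoc]
  exact core q.tail htne q.fstIdx_ne _ b ha' hab'

section Transfer

universe u v

variable (A : Type u) (B : Type v) [Group A] [Group B]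

/-- The two factors, `ULift`ed into a common universe. -/
abbrev Fac : Bool → Type (max u v) := fun b => cond b (ULift.{v} A) (ULift.{u} B)

instance : ∀ b, Group (Fac A B b)
  | true => inferInstanceAs (Group (ULift A))
  | false => inferInstanceAs (Group (ULift B))

/-- The canonical map `A ∗ B →* CoprodI (Fac A B)`. -/
def φ : Coprod A B →* CoprodI (Fac A B) :=
  Coprod.lift ((of (i := true)).comp (MulEquiv.ulift.symm.toMonoidHom))
              ((of (i := false)).comp (MulEquiv.ulift.symm.toMonoidHom))

/-- The summand homs for the inverse direction. -/
def ψfun : ∀ b, Fac A B b →* Coprod A B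
  | true => (Coprod.inl).comp MulEquiv.ulift.toMonoidHom
  | false => (Coprod.inr).comp MulEquiv.ulift.toMonoidHom

/-- The canonical map `CoprodI (Fac A B) →* A ∗ B`. -/
def ψ : CoprodI (Fac A B) →* Coprod A B := CoprodI.lift (ψfun A B)

theorem ψ_comp_φ : (ψ A B).comp (φ A B) = MonoidHom.id _ := by
  apply Coprod.hom_ext
  · ext a
    simp only [MonoidHom.comp_apply, MonoidHom.id_apply, φ, Coprod.lift_apply_inl]
    erw [CoprodI.lift_of]
  · ext b
    simp only [MonoidHom.comp_apply, MonoidHom.id_apply, φ, Coprod.lift_apply_inr]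
    erw [CoprodI.lift_of]

theorem ψ_φ (x : Coprod A B) : ψ A B (φ A B x) = x := by
  simpa using DFunLike.congr_fun (ψ_comp_φ A B) x

end Transfer

end Stmt13

/-- in a free product `A * B` with `B` nontrivial, the free factor `A`
is malnormal: for every `u ∈ A * B` with `u ∉ A`, `A ∩ u⁻¹Au = {1}`. -/
theorem stmt_13 (A B : Type*) [Group A] [Group B] [Nontrivial B]
    (u : Coprod A B) (hu : u ∉ (Coprod.inl : A →* Coprod A B).range)
    (x : Coprod A B) (hx : x ∈ (Coprod.inl : A →* Coprod A B).range)
    (hconj : u⁻¹ * x * u ∈ (Coprod.inl : A →* Coprod A B).range) :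
    x = 1 := by
  obtain ⟨x₀, rfl⟩ := hx
  obtain ⟨y₀, hy⟩ := hconj
  have hxy : (Coprod.inl x₀ : Coprod A B) * u = u * Coprod.inl y₀ := by
    rw [hy]
    group
  have h2 := congrArg (Stmt13.φ A B) hxy
  simp only [map_mul] at h2
  have hφinl : ∀ z : A, Stmt13.φ A B (Coprod.inl z) =
      Monoid.CoprodI.of (i := true) (ULift.up z) := by
    intro z
    simp [Stmt13.φ, Coprod.lift_apply_inl]
    rfl
  have hφu : Stmt13.φ A B u ∉ MonoidHom.range
      (Monoid.CoprodI.of : Stmt13.Fac A B true →* Monoid.CoprodI (Stmt13.Fac A B)) := by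
    rintro ⟨m, hm⟩
    apply hu
    refine ⟨(MulEquiv.ulift m : A), ?_⟩
    have := congrArg (Stmt13.ψ A B) hm
    rw [Stmt13.ψ_φ] at this
    rw [← this]
    show _ = Monoid.CoprodI.lift (Stmt13.ψfun A B) (Monoid.CoprodI.of m)
    erw [Monoid.CoprodI.lift_of]
    rfl
  rw [hφinl x₀, hφinl y₀] at h2
  have hkey : (ULift.up x₀ : ULift A) = 1 := Stmt13.key hφu h2
  have : x₀ = 1 := congrArg ULift.down hkey
  rw [this, map_one]
end

section
/- Let L be a nontrivial finite group, M a nontrivial group, Z an infinite cyclic group. In the group R = (L × (M * Z)) * Z', where Z' is another infinite cyclic group, the subgroup H = L × M (included via the first free factor) satisfies: H is not malnormal in R, yet R contains no nontrivial finite normal subgroup. -/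
open Monoid

namespace Stmt17Aux

open Monoid.CoprodI

universe u v

variable {ι : Type*} {G : ι → Type*} [∀ i, Group (G i)]

/-- Powers of a `NeWord` with distinct end indices, as `NeWord`s. -/
def powNeWord {i j : ι} (hji : j ≠ i) (w : NeWord G i j) : ℕ → NeWord G i j
  | 0 => w
  | (k + 1) => NeWord.append w hji (powNeWord hji w k)

lemma powNeWord_prod {i j : ι} (hji : j ≠ i) (w : NeWord G i j) (k : ℕ) :
    (powNeWord hji w k).prod = w.prod ^ (k + 1) := by
  induction k with
  | zero => simp [powNeWord]
  | succ k ih => simp [powNeWord, ih, pow_succ']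

lemma neWord_prod_ne_one {i j : ι} (w : NeWord G i j) : w.prod ≠ 1 := by
  classical
  intro h
  have hinj : Function.Injective (Word.prod (M := G)) :=
    (Word.equiv (M := G)).symm.injective
  have hempty : w.toWord = Word.empty := hinj (h.trans (Word.prod_empty).symm)
  have : w.toList = ([] : List (Σ i, G i)) := congrArg Word.toList hempty
  exact NeWord.toList_ne_nil w this

lemma not_mem_of_ne {N : Subgroup (CoprodI G)} (hfin : (N : Set (CoprodI G)).Finite)
    {i j : ι} (hij : i ≠ j) (w : NeWord G i j) (hw : w.prod ∈ N) : False := by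
  haveI : Finite N := hfin.to_subtype
  have h0 : orderOf (⟨w.prod, hw⟩ : N) ≠ 0 := (orderOf_pos _).ne'
  apply h0
  rw [orderOf_eq_zero_iff']
  intro nn hnn hpow
  have hpow' : w.prod ^ nn = 1 := by
    simpa using congrArg (Subtype.val) hpow
  obtain ⟨k, rfl⟩ := Nat.exists_eq_succ_of_ne_zero hnn.ne'
  rw [← powNeWord_prod (Ne.symm hij) w k] at hpow'
  exact neWord_prod_ne_one _ hpow'

lemma coprodI_bool {G : Bool → Type u} [∀ b, Group (G b)] [∀ b, Nontrivial (G b)]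
    (N : Subgroup (CoprodI G)) (hN : N.Normal) (hfin : (N : Set (CoprodI G)).Finite) :
    N = ⊥ := by
  classical
  by_contra hbot
  obtain ⟨⟨n, hnN⟩, hn1⟩ := Subgroup.ne_bot_iff_exists_ne_one.mp hbot
  have hn1 : n ≠ 1 := by simpa [Subtype.ext_iff] using hn1
  have hw : Word.equiv n ≠ Word.empty := by
    intro h
    have h1 : Word.prod (Word.equiv n) = n := (Word.equiv (M := G)).symm_apply_apply n
    rw [h, Word.prod_empty] at h1
    exact hn1 h1.symm
  obtain ⟨i, j, w, hwn⟩ := NeWord.of_word _ hw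
  have hprod : w.prod = n := by
    show Word.prod w.toWord = n
    rw [hwn]
    exact (Word.equiv (M := G)).symm_apply_apply n
  by_cases hij : i = j
  · subst hij
    obtain ⟨b, hb⟩ := exists_ne (1 : G (!i))
    have hii : i ≠ !i := (Bool.not_ne_self i).symm
    have hb' : b⁻¹ ≠ 1 := inv_ne_one.mpr hb
    let w2 : NeWord G i (!i) :=
      ((w.append hii (NeWord.singleton b⁻¹ hb')).append (Ne.symm hii) w).append hii
        (NeWord.singleton b hb)
    have hw2 : w2.prod ∈ N := by
      have heq : w2.prod = n * ((CoprodI.of b)⁻¹ * n * CoprodI.of b) := by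
        simp [w2, hprod, mul_assoc]
      rw [heq]
      exact N.mul_mem hnN (by simpa using hN.conj_mem n hnN (CoprodI.of b)⁻¹)
    exact absurd hw2 (fun h => not_mem_of_ne hfin hii w2 h)
  · exact absurd (hprod ▸ hnN) (fun h => not_mem_of_ne hfin hij w h)

lemma coprod_same {A B : Type u} [Group A] [Group B] [Nontrivial A] [Nontrivial B]
    (N : Subgroup (Coprod A B)) (hN : N.Normal) (hfin : (N : Set (Coprod A B)).Finite) :
    N = ⊥ := by
  let G : Bool → Type u := fun b => cond b A B
  letI instG : ∀ b, Group (G b) := fun b =>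
    Bool.rec (motive := fun b => Group (G b)) (‹Group B›)
      (‹Group A›) b
  letI instN : ∀ b, Nontrivial (G b) := fun b =>
    Bool.rec (motive := fun b => Nontrivial (G b)) (‹Nontrivial B›)
      (‹Nontrivial A›) b
  let fi : ∀ b, G b →* Coprod A B := fun b =>
    Bool.rec (motive := fun b => G b →* Coprod A B) (Coprod.inr : B →* Coprod A B)
      (Coprod.inl : A →* Coprod A B) b
  let φ : Coprod A B →* CoprodI G :=
    Coprod.lift (CoprodI.of (M := G) (i := true)) (CoprodI.of (M := G) (i := false))
  let ψ : CoprodI G →* Coprod A B := CoprodI.lift fi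
  have h1 : ψ.comp φ = MonoidHom.id _ := by
    apply Coprod.hom_ext
    · ext x
      simp only [MonoidHom.comp_apply, MonoidHom.id_apply, φ, ψ, Coprod.lift_apply_inl]
      exact CoprodI.lift_of (i := true) fi x
    · ext x
      simp only [MonoidHom.comp_apply, MonoidHom.id_apply, φ, ψ, Coprod.lift_apply_inr]
      exact CoprodI.lift_of (i := false) fi x
  have h2 : φ.comp ψ = MonoidHom.id _ := by
    apply CoprodI.ext_hom
    intro b
    cases b <;> ext x <;>
      simp only [MonoidHom.comp_apply, MonoidHom.id_apply, φ, ψ, CoprodI.lift_of] <;>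
      rfl
  let e : Coprod A B ≃* CoprodI G := MonoidHom.toMulEquiv φ ψ h1 h2
  have hfin' : ((N.map e.toMonoidHom : Subgroup (CoprodI G)) : Set (CoprodI G)).Finite := by
    rw [Subgroup.coe_map]
    exact hfin.image _
  have hb := coprodI_bool (G := G) (N.map e.toMonoidHom) (hN.map _ e.surjective) hfin'
  exact (Subgroup.map_eq_bot_iff_of_injective N
    (f := e.toMonoidHom) e.injective).mp hb

lemma coprod_no_finite_normal {A : Type u} {B : Type v} [Group A] [Group B]
    [Nontrivial A] [Nontrivial B] (N : Subgroup (Coprod A B)) (hN : N.Normal)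
    (hfin : (N : Set (Coprod A B)).Finite) : N = ⊥ := by
  let e : Coprod A B ≃* Coprod (ULift.{max u v} A) (ULift.{max u v} B) :=
    MulEquiv.coprodCongr MulEquiv.ulift.symm MulEquiv.ulift.symm
  have hfin' : ((N.map e.toMonoidHom) : Set (Coprod (ULift.{max u v} A)
      (ULift.{max u v} B))).Finite := by
    rw [Subgroup.coe_map]
    exact hfin.image _
  have hb := coprod_same (N.map e.toMonoidHom) (hN.map _ e.surjective) hfin'
  exact (Subgroup.map_eq_bot_iff_of_injective N
    (f := e.toMonoidHom) e.injective).mp hb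

end Stmt17Aux

/-- for `L` a nontrivial finite group, `M` a nontrivial group and `Z`,
`Z'` infinite cyclic groups (here copies of `FreeGroup Unit`), the subgroup
`H = L × M` of `R = (L × (M * Z)) * Z'` is not malnormal, yet `R` contains no
nontrivial finite normal subgroup. -/
theorem stmt_17 (L M : Type*) [Group L] [Finite L] [Nontrivial L] [Group M] [Nontrivial M] :
    let R := Coprod (L × Coprod M (FreeGroup Unit)) (FreeGroup Unit)
    let H : Subgroup R :=
      (((⊤ : Subgroup L).prod (Coprod.inl : M →* _).range).map
        (Coprod.inl : L × Coprod M (FreeGroup Unit) →* R))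
    (∃ r : R, r ∉ H ∧ ∃ x : R, x ≠ 1 ∧ x ∈ H ∧ r⁻¹ * x * r ∈ H) ∧
    (∀ N : Subgroup R, N.Normal → (N : Set R).Finite → N = ⊥) := by
  intro R H
  constructor
  · obtain ⟨ℓ, hℓ⟩ := exists_ne (1 : L)
    refine ⟨Coprod.inl (1, Coprod.inr (FreeGroup.of ())), ?_,
      Coprod.inl (ℓ, 1), ?_, ?_, ?_⟩
    · rintro ⟨⟨p1, p2⟩, hp, hpe⟩
      have hpe' : (p1, p2) = ((1 : L), Coprod.inr (FreeGroup.of ())) :=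
        Coprod.inl_injective hpe
      rw [SetLike.mem_coe, Subgroup.mem_prod] at hp
      obtain ⟨m, hm⟩ := hp.2
      have h2 : p2 = Coprod.inr (FreeGroup.of ()) := congrArg Prod.snd hpe'
      rw [h2] at hm
      have := congrArg (Coprod.snd : Coprod M (FreeGroup Unit) →* FreeGroup Unit) hm
      simp at this
    · intro h
      have : (ℓ, (1 : Coprod M (FreeGroup Unit))) = 1 := Coprod.inl_injective (by simpa using h)
      exact hℓ (congrArg Prod.fst this)
    · exact ⟨(ℓ, 1), Subgroup.mem_prod.mpr ⟨trivial, ⟨1, map_one _⟩⟩, rfl⟩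
    · have key : (Coprod.inl ((1 : L), Coprod.inr (FreeGroup.of ())) : R)⁻¹ *
          Coprod.inl (ℓ, (1 : Coprod M (FreeGroup Unit))) *
          Coprod.inl ((1 : L), Coprod.inr (FreeGroup.of ())) =
          Coprod.inl (ℓ, (1 : Coprod M (FreeGroup Unit))) := by
        have hp : (((1 : L), Coprod.inr (FreeGroup.of ())) :
              L × Coprod M (FreeGroup Unit))⁻¹ * (ℓ, 1) *
              ((1 : L), Coprod.inr (FreeGroup.of ())) = (ℓ, 1) := by
          simp [Prod.ext_iff]
        rw [← map_inv, ← map_mul, ← map_mul, hp]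
      rw [key]
      exact ⟨(ℓ, 1), Subgroup.mem_prod.mpr ⟨trivial, ⟨1, map_one _⟩⟩, rfl⟩
  · intro N hN hfin
    exact Stmt17Aux.coprod_no_finite_normal N hN hfin
end

section
/- Let H be a group with subgroups P, P^φ and an isomorphism φ : P → P^φ, and let H̃ = ⟨H, t | p^t = p^φ for all p ∈ P⟩ be the corresponding HNN extension. If h, g ∈ H are conjugate in H̃ then there is a finite sequence h = h₀, h₁, …, h_n = g of elements of H such that each consecutive pair is related either by conjugation within H, or by h_{i+1} = φ(h_i) with h_i ∈ P, or by h_{i+1} = φ⁻¹(h_i) with h_i ∈ P^φ. -/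
open HNNExtension HNNExtension.NormalWord

namespace Stmt18

variable {G : Type*} [Group G] {A B : Subgroup G}

/-- The elementary relation: conjugation in the base group, or applying `φ` or `φ⁻¹`. -/
def Rel (A B : Subgroup G) (φ : A ≃* B) (a b : G) : Prop :=
  IsConj a b ∨ (∃ hp : a ∈ A, b = (φ ⟨a, hp⟩ : G)) ∨ (∃ hp : a ∈ B, b = (φ.symm ⟨a, hp⟩ : G))

variable (φ : A ≃* B)

/-- Product of a list of letters `t^u * g` in the HNN extension. -/
def prodL (l : List (ℤˣ × G)) : HNNExtension G A B φ :=
  (l.map (fun x => t ^ ((x.1 : ℤˣ) : ℤ) * HNNExtension.of x.2)).prod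

@[simp] theorem prodL_nil : prodL φ ([] : List (ℤˣ × G)) = 1 := by simp [prodL]

@[simp] theorem prodL_cons (a : ℤˣ × G) (l : List (ℤˣ × G)) :
    prodL φ (a :: l) = t ^ ((a.1 : ℤˣ) : ℤ) * HNNExtension.of a.2 * prodL φ l := by
  simp [prodL]

@[simp] theorem prodL_append (l₁ l₂ : List (ℤˣ × G)) :
    prodL φ (l₁ ++ l₂) = prodL φ l₁ * prodL φ l₂ := by simp [prodL]

theorem reducedWord_prod (w : ReducedWord G A B) :
    w.prod φ = HNNExtension.of w.head * prodL φ w.toList := rfl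

/-- `t^u * of x = of (φ^u x) * t^u` for `x` in the appropriate subgroup. -/
theorem tpow_conj (u : ℤˣ) (x : G) (hx : x ∈ toSubgroup A B u) :
    (t ^ ((u : ℤˣ) : ℤ) * HNNExtension.of x : HNNExtension G A B φ)
      = HNNExtension.of ((toSubgroupEquiv φ u ⟨x, hx⟩ : G)) * t ^ ((u : ℤˣ) : ℤ) := by
  rcases Int.units_eq_one_or u with rfl | rfl
  · have h1 := t_mul_of (φ := φ) ⟨x, hx⟩; simp; exact h1
  · have h1 := inv_t_mul_of (φ := φ) ⟨x, hx⟩; simp; exact h1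

/-- The inverse of the word `of h * prodL l`, as (head, list). -/
def invL : G → List (ℤˣ × G) → G × List (ℤˣ × G)
  | h, [] => (h⁻¹, [])
  | h, (u, g) :: l => ((invL g l).1, (invL g l).2 ++ [(-u, h⁻¹)])

theorem invL_prod (h : G) (l : List (ℤˣ × G)) :
    HNNExtension.of (invL h l).1 * prodL φ (invL h l).2
      = (HNNExtension.of h * prodL φ l)⁻¹ := by
  induction l generalizing h with
  | nil => simp [invL]
  | cons a l ih =>
    obtain ⟨u, g⟩ := a
    rw [invL]
    simp only [prodL_append, prodL_cons, prodL_nil, mul_one, prodL_cons]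
    rw [← mul_assoc, ih]
    simp [mul_inv_rev, mul_assoc, zpow_neg]

theorem invL_fst_map (h : G) (l : List (ℤˣ × G)) :
    (invL h l).2.map Prod.fst = (l.map (fun p => -p.1)).reverse := by
  induction l generalizing h with
  | nil => simp [invL]
  | cons a l ih =>
    obtain ⟨u, g⟩ := a
    rw [invL]
    simp [ih]

theorem invL_head_concat (h : G) (l : List (ℤˣ × G)) (u : ℤˣ) (a : G) :
    (invL h (l ++ [(u, a)])).1 = a⁻¹ := by
  induction l generalizing h with
  | nil => simp [invL]
  | cons b l ih =>
    obtain ⟨u', g'⟩ := b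
    rw [List.cons_append, invL, ih]

theorem invL_getLast? (h g : G) (u : ℤˣ) (l : List (ℤˣ × G)) :
    (invL h ((u, g) :: l)).2.getLast? = some (-u, h⁻¹) := by
  rw [invL]; simp

theorem invL_chain (h : G) (l : List (ℤˣ × G))
    (hc : l.Chain' (fun a b => a.2 ∈ toSubgroup A B a.1 → a.1 = b.1)) :
    (invL h l).2.Chain' (fun a b => a.2 ∈ toSubgroup A B a.1 → a.1 = b.1) := by
  induction l generalizing h with
  | nil => simp [invL]; exact List.isChain_nil
  | cons a l ih =>
    obtain ⟨u, g⟩ := a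
    obtain ⟨h1, h2⟩ := List.isChain_cons.1 hc
    rw [invL]; unfold List.Chain'; rw [List.isChain_append]
    refine ⟨ih g h2, List.isChain_singleton _, ?_⟩
    rintro x hx y hy
    simp only [List.head?_cons, Option.mem_def, Option.some.injEq] at hy
    subst hy
    rcases l with _ | ⟨⟨u', g'⟩, l'⟩
    · simp [invL] at hx
    · rw [invL_getLast? g g' u' l'] at hx
      simp only [Option.mem_def, Option.some.injEq] at hx
      subst hx
      intro hmem
      have hR : g ∈ toSubgroup A B u → u = u' := fun hg => h1 (u', g') (by simp) hg
      simp only at hmem ⊢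
      by_cases huu : u = u'
      · rw [huu]
      · exfalso
        apply huu
        apply hR
        have : (-u' : ℤˣ) = u := by
          rcases Int.units_eq_one_or u with rfl | rfl <;>
            rcases Int.units_eq_one_or u' with rfl | rfl
          · exact absurd rfl huu
          · simp
          · simp
          · exact absurd rfl huu
        rw [this] at hmem
        simpa using inv_mem hmem


theorem key_nil (g₀ h g : G)
    (heq : (HNNExtension.of g₀ : HNNExtension G A B φ) * HNNExtension.of h
      = HNNExtension.of g * HNNExtension.of g₀) :
    Relation.ReflTransGen (Rel A B φ) h g := by
  have h2 : g₀ * h = g * g₀ :=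
    HNNExtension.of_injective (φ := φ) (by rw [map_mul, map_mul]; exact heq)
  exact Relation.ReflTransGen.single (Or.inl (isConj_iff.2 ⟨g₀, by rw [h2]; group⟩))

theorem key : ∀ (n : ℕ) (l : List (ℤˣ × G)), l.length ≤ n →
    l.Chain' (fun a b => a.2 ∈ toSubgroup A B a.1 → a.1 = b.1) →
    ∀ (g₀ h g : G),
      (HNNExtension.of g₀ * prodL φ l) * HNNExtension.of h
        = HNNExtension.of g * (HNNExtension.of g₀ * prodL φ l) →
      Relation.ReflTransGen (Rel A B φ) h g := by
  intro n
  induction n with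
  | zero =>
    intro l hlen _ g₀ h g heq
    rw [Nat.le_zero, List.length_eq_zero_iff] at hlen
    subst hlen
    simp only [prodL_nil, mul_one] at heq
    exact key_nil φ g₀ h g heq
  | succ n ih =>
    intro l hlen hchain g₀ h g heq
    rcases List.eq_nil_or_concat l with rfl | ⟨l', ⟨un, gn⟩, rfl⟩
    · simp only [prodL_nil, mul_one] at heq
      exact key_nil φ g₀ h g heq
    · simp only [List.concat_eq_append] at hlen hchain heq
      have hlen' : l'.length ≤ n := by simp at hlen; omega
      have hch := List.isChain_append.1 hchain
      set lmod : List (ℤˣ × G) := l' ++ [(un, gn * h)] with hlmod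
      have hmodchain : lmod.Chain' (fun a b => a.2 ∈ toSubgroup A B a.1 → a.1 = b.1) := by
        refine List.isChain_append.2 ⟨hch.1, List.isChain_singleton _, ?_⟩
        rintro x hx y hy
        simp only [List.head?_cons, Option.mem_def, Option.some.injEq] at hy
        subst hy
        simpa using hch.2.2 x hx (un, gn) (by simp)
      set W₁ : ReducedWord G A B :=
        ⟨(gn * h)⁻¹, (invL g₀ lmod).2, invL_chain g₀ lmod hmodchain⟩ with hW₁
      set W₂ : ReducedWord G A B :=
        ⟨gn⁻¹, (invL (g * g₀) (l' ++ [(un, gn)])).2,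
          invL_chain (g * g₀) _ hchain⟩ with hW₂
      have hprod : W₁.prod φ = W₂.prod φ := by
        rw [reducedWord_prod, reducedWord_prod, hW₁, hW₂]
        show HNNExtension.of (gn * h)⁻¹ * prodL φ (invL g₀ lmod).2
          = HNNExtension.of gn⁻¹ * prodL φ (invL (g * g₀) (l' ++ [(un, gn)])).2
        rw [← invL_head_concat g₀ l' un (gn * h), ← hlmod, invL_prod,
          ← invL_head_concat (g * g₀) l' un gn, invL_prod]
        congr 1
        simp only [hlmod, prodL_append, prodL_cons, prodL_nil, mul_one, map_mul, mul_assoc] at heq ⊢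
        exact heq
      have hfst : W₁.toList.head?.map Prod.fst = some (-un) := by
        rw [← List.head?_map]
        show ((invL g₀ lmod).2.map Prod.fst).head? = _
        rw [invL_fst_map, hlmod]
        simp
      have hx0 := (HNNExtension.ReducedWord.map_fst_eq_and_of_prod_eq φ hprod).2 (-un)
        (by rw [Option.mem_def, ← hfst])
      have hx : gn * h * gn⁻¹ ∈ toSubgroup A B un := by
        have : W₁.head⁻¹ * W₂.head = gn * h * gn⁻¹ := by
          rw [hW₁, hW₂]; show ((gn*h)⁻¹)⁻¹ * gn⁻¹ = _; group
        rw [this, neg_neg] at hx0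
        exact hx0
      set x : G := gn * h * gn⁻¹ with hxdef
      set h' : G := (toSubgroupEquiv φ un ⟨x, hx⟩ : G) with hh'
      have r1 : Rel A B φ h x := Or.inl (isConj_iff.2 ⟨gn, rfl⟩)
      have r2 : Rel A B φ x h' := by
        rcases Int.units_eq_one_or un with rfl | rfl
        · exact Or.inr (Or.inl ⟨hx, by rw [hh', toSubgroupEquiv_one]; rfl⟩)
        · exact Or.inr (Or.inr ⟨hx, by rw [hh', toSubgroupEquiv_neg_one]; rfl⟩)
      have e1 : (t ^ ((un : ℤˣ) : ℤ) * HNNExtension.of x : HNNExtension G A B φ)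
          = HNNExtension.of h' * t ^ ((un : ℤˣ) : ℤ) := tpow_conj φ un x hx
      have hx_eq : (HNNExtension.of x * HNNExtension.of gn : HNNExtension G A B φ)
          = HNNExtension.of gn * HNNExtension.of h := by
        rw [← map_mul, ← map_mul]; congr 1; rw [hxdef]; group
      have heq' : (HNNExtension.of g₀ * prodL φ l') * HNNExtension.of h'
          = HNNExtension.of g * (HNNExtension.of g₀ * prodL φ l') := by
        apply mul_right_cancel (b := t ^ ((un : ℤˣ) : ℤ) * HNNExtension.of gn)
        simp only [prodL_append, prodL_cons, prodL_nil, mul_one, mul_assoc] at heq ⊢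
        rw [← mul_assoc (HNNExtension.of h'), ← e1, mul_assoc (t ^ ((un : ℤˣ) : ℤ)), hx_eq]
        exact heq
      exact Relation.ReflTransGen.head r1 (Relation.ReflTransGen.head r2
        (ih l' hlen' hch.1 g₀ h' g heq'))

theorem rtg_to_chain {α : Type*} {r : α → α → Prop} {h g : α}
    (hr : Relation.ReflTransGen r h g) :
    ∃ (n : ℕ) (c : Fin (n + 1) → α), c 0 = h ∧ c (Fin.last n) = g ∧
      ∀ i : Fin n, r (c i.castSucc) (c i.succ) := by
  induction hr with
  | refl => exact ⟨0, fun _ => h, rfl, rfl, fun i => i.elim0⟩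
  | @tail b d _hab hbc ih =>
    obtain ⟨n, c, h0, hl, hs⟩ := ih
    refine ⟨n + 1, Fin.snoc c d, ?_, ?_, ?_⟩
    · rw [show (0 : Fin (n + 2)) = Fin.castSucc 0 by rfl, Fin.snoc_castSucc]
      exact h0
    · rw [Fin.snoc_last]
    · intro i
      refine Fin.lastCases ?_ ?_ i
      · rw [Fin.succ_last, Fin.snoc_last, Fin.snoc_castSucc, hl]
        exact hbc
      · intro j
        rw [Fin.succ_castSucc, Fin.snoc_castSucc, Fin.snoc_castSucc]
        exact hs j

end Stmt18


/-- conjugacy in HNN extensions between base-group elements: let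
`H̃ = HNN(H, P, P^φ, φ)` with `t⁻¹ p t = φ(p)`.  If `h, g ∈ H` are conjugate in `H̃`,
then there is a finite sequence `h = h₀, h₁, …, h_n = g` in `H` in which each
consecutive pair is related by conjugation in `H`, or by an application of `φ`
(on `P`), or by an application of `φ⁻¹` (on `P^φ`). -/
theorem stmt_18 (H : Type*) [Group H] (P Pφ : Subgroup H) (φ : P ≃* Pφ)
    (h g : H)
    (hconj : IsConj (HNNExtension.of h : HNNExtension H P Pφ φ) (HNNExtension.of g)) :
    ∃ (n : ℕ) (c : Fin (n + 1) → H),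
      c 0 = h ∧ c (Fin.last n) = g ∧
      ∀ i : Fin n,
        IsConj (c i.castSucc) (c i.succ) ∨
        (∃ hp : c i.castSucc ∈ P, c i.succ = (φ ⟨c i.castSucc, hp⟩ : Pφ)) ∨
        (∃ hp : c i.castSucc ∈ Pφ, c i.succ = (φ.symm ⟨c i.castSucc, hp⟩ : P)) := by
  obtain ⟨u, hu⟩ := hconj
  obtain ⟨d⟩ := HNNExtension.NormalWord.TransversalPair.nonempty H P Pφ
  set w := HNNExtension.NormalWord.equiv φ d (↑u) with hwdef
  have hwp : HNNExtension.NormalWord.ReducedWord.prod φ w.toReducedWord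
      = (↑u : HNNExtension H P Pφ φ) := by
    exact (HNNExtension.NormalWord.equiv φ d).symm_apply_apply ↑u
  have heq : (HNNExtension.of w.toReducedWord.head
        * Stmt18.prodL φ w.toReducedWord.toList) * HNNExtension.of h
      = HNNExtension.of g * (HNNExtension.of w.toReducedWord.head
        * Stmt18.prodL φ w.toReducedWord.toList) := by
    rw [← Stmt18.reducedWord_prod, hwp]
    exact hu
  have hrtg := Stmt18.key φ w.toReducedWord.toList.length w.toReducedWord.toList le_rfl
    w.toReducedWord.chain w.toReducedWord.head h g heq
  obtain ⟨n, cseq, h0, hl, hs⟩ := Stmt18.rtg_to_chain hrtg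
  exact ⟨n, cseq, h0, hl, fun i => hs i⟩
end

section
/- Let G be a nontrivial group, w ∈ G * ⟨t⟩∞ a unimodular word, and k ≥ 2. Then the center of G̃ = (G * ⟨t⟩∞)/⟨⟨w^k⟩⟩ is trivial, assuming that G embeds naturally in G̃ and that G is malnormal in G̃. -/
open Monoid

/-- The free product `G * ⟨t⟩∞`. -/
abbrev RelFree (G : Type*) [Group G] := Coprod G (FreeGroup Unit)

/-- The `t`-exponent-sum homomorphism. -/
def expSum (G : Type*) [Group G] : RelFree G →* Multiplicative ℤ :=
  Coprod.lift 1 (FreeGroup.lift fun _ => Multiplicative.ofAdd (1 : ℤ))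

/-- let `G` be a nontrivial group, `w` a unimodular word and `k ≥ 2`.
Assuming `G` embeds naturally in `G̃ = (G * ⟨t⟩∞)/⟨⟨w^k⟩⟩` and its image is malnormal
there, the center of `G̃` is trivial. -/
theorem stmt_19 (G : Type*) [Group G] [Nontrivial G] (w : RelFree G) (k : ℕ) (hk : 2 ≤ k)
    (hw : (expSum G w).toAdd = 1) :
    let Gt := RelFree G ⧸ Subgroup.normalClosure {w ^ k}
    let ι : G →* Gt := (QuotientGroup.mk' _).comp Coprod.inl
    Function.Injective ι →
    (∀ u : Gt, u ∉ ι.range → ∀ x : Gt, x ∈ ι.range → u⁻¹ * x * u ∈ ι.range → x = 1) →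
    Subgroup.center Gt = ⊥ := by
  intro Gt ι hinj hmal
  haveI : Fact (1 < k) := ⟨hk⟩
  -- exponent sum modulo k
  set f : RelFree G →* Multiplicative (ZMod k) :=
    (AddMonoidHom.toMultiplicative (Int.castAddHom (ZMod k))).comp (expSum G) with hf
  have hfw : f w = Multiplicative.ofAdd ((1 : ℤ) : ZMod k) := by
    simp only [hf, MonoidHom.comp_apply]
    have : expSum G w = Multiplicative.ofAdd (1 : ℤ) := by
      rw [← hw]; rfl
    rw [this]; rfl
  have hker : Subgroup.normalClosure {w ^ k} ≤ f.ker := by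
    apply Subgroup.normalClosure_le_normal
    intro x hx
    simp only [Set.mem_singleton_iff] at hx
    subst hx
    have : f (w ^ k) = 1 := by
      rw [map_pow, hfw]
      rw [← ofAdd_nsmul]
      simp [ZMod.natCast_self]
    exact this
  set φ : Gt →* Multiplicative (ZMod k) := QuotientGroup.lift _ f hker with hφ
  have hφι : ∀ g : G, φ (ι g) = 1 := by
    intro g
    show f (Coprod.inl g) = 1
    simp only [hf, MonoidHom.comp_apply]
    have : expSum G (Coprod.inl g) = 1 := by
      simp [expSum]
    rw [this]; exact map_one _
  set tbar : Gt := QuotientGroup.mk (Coprod.inr (FreeGroup.of ())) with htbar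
  have hφt : φ tbar = Multiplicative.ofAdd ((1 : ℤ) : ZMod k) := by
    show f (Coprod.inr (FreeGroup.of ())) = _
    simp only [hf, MonoidHom.comp_apply]
    have : expSum G (Coprod.inr (FreeGroup.of ())) = Multiplicative.ofAdd (1 : ℤ) := by
      simp [expSum]
    rw [this]; rfl
  have htnot : tbar ∉ ι.range := by
    rintro ⟨g, hg⟩
    have := hφι g
    rw [hg, hφt] at this
    have h1 : ((1 : ℤ) : ZMod k) = 0 := by
      have := congrArg Multiplicative.toAdd this
      simpa using this
    simp at h1
  rw [Subgroup.eq_bot_iff_forall]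
  intro z hz
  rw [Subgroup.mem_center_iff] at hz
  by_cases hzr : z ∈ ι.range
  · apply hmal tbar htnot z hzr
    have : tbar⁻¹ * z * tbar = z := by
      rw [hz tbar⁻¹, mul_assoc, inv_mul_cancel, mul_one]
    rw [this]; exact hzr
  · obtain ⟨g, hg⟩ := exists_ne (1 : G)
    have hιg : ι g ∈ ι.range := ⟨g, rfl⟩
    have : z⁻¹ * ι g * z = ι g := by
      rw [mul_assoc, hz (ι g), ← mul_assoc, inv_mul_cancel, one_mul]
    have := hmal z hzr (ι g) hιg (by rw [this]; exact hιg)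
    exact absurd (hinj (by simpa using this)) hg
end
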